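/- Let X be a compact Hausdorff space, E a Banach space over 𝕂 ∈ {ℝ, ℂ}, and A an E-separating 𝕂-linear subspace of C(X,E). Then η₂(A) = X, i.e., every point of X is of type two for A. -/
import Mathlib

open Set Metric

variable {𝕂 : Type*} [RCLike 𝕂]
variable {X : Type*} [TopologicalSpace X] [CompactSpace X] [T2Space X]
variable {E : Type*} [NormedAddCommGroup E] [NormedSpace ℝ E] [NormedSpace 𝕂 E]
  [IsScalarTower ℝ 𝕂 E] [CompleteSpace E]

def MaxConvexIn {M : Type*} [AddCommGroup M] [Module ℝ M] (S C : Set M) : Prop :=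
  C ⊆ S ∧ Convex ℝ C ∧ ∀ C' : Set M, C' ⊆ S → Convex ℝ C' → C ⊆ C' → C' = C

def Vset (A : Subspace 𝕂 C(X, E)) (x : X) (K : Set E) : Set C(X, E) :=
  {f | f ∈ A ∧ ‖f‖ = 1 ∧ f x ∈ K}

def ESeparating (A : Subspace 𝕂 C(X, E)) : Prop :=
  ∀ x x' : X, x ≠ x' → ∀ u : E, ∃ f ∈ A, f x = 0 ∧ f x' = u ∧ ‖f‖ = ‖u‖

def typeTwoPoints (A : Subspace 𝕂 C(X, E)) : Set X :=
  {x | ∀ K K' : Set E, MaxConvexIn (sphere (0 : E) 1) K →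
    MaxConvexIn (sphere (0 : E) 1) K' →
    ∀ y : X, Vset A x K ⊆ Vset A y K' → x = y}

/-- If `A` is `E`-separating, then every point of `X` is of type two for `A`. -/
theorem stmt4 [Nontrivial E] (A : Subspace 𝕂 C(X, E)) (hA : ESeparating A) :
    typeTwoPoints A = Set.univ := by
  rw [Set.eq_univ_iff_forall]
  intro x K K' hK hK' y hsub
  by_contra hxy
  -- K is nonempty
  have hKne : K.Nonempty := by
    by_contra h
    rw [Set.not_nonempty_iff_eq_empty] at h
    obtain ⟨v, hv⟩ := exists_norm_eq E (le_of_lt one_pos)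
    have := hK.2.2 {v} (by simp [hv]) (convex_singleton v) (by simp [h])
    rw [h] at this
    exact Set.singleton_ne_empty v this
  obtain ⟨u, hu⟩ := hKne
  have huS : ‖u‖ = 1 := by simpa using hK.1 hu
  obtain ⟨f, hfA, hfy, hfx, hfn⟩ := hA y x (Ne.symm hxy) u
  have hf : f ∈ Vset A x K := ⟨hfA, by rw [hfn, huS], by rw [hfx]; exact hu⟩
  have h2 := hsub hf
  have h0 := hK'.1 h2.2.2
  rw [hfy] at h0
  simp at h0
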